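/- arXiv:0908.4031 — 2 statements merged into one kernel-verified Lean document; each statement's English description precedes it below -/
import Mathlib

section
/- If x > 5 or y > 3 (with x, y positive integers), then |2^x - 3^y| > 10. -/
/-!
Work modulo `N = 2⁶ · 3⁴ · 17 = 88128`. For `x ≥ 6` the residue of `2^x` is periodic with period
`216`, the order of `2` modulo `3⁴ · 17`, and for `y ≥ 4` the residue of `3^y` is periodic with
period `16`, the order of `3` modulo `2⁶ · 17`. So `2^x - 3^y` takes at most `216 · 16` values
modulo `N`, and a finite check shows that none of them is within `10` of `0`. Below these
exponents one of the two powers is too small for the other to come within `10` of it.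
-/

theorem pow_eq_pow_add_mod_of_pow_add_eq {M : Type*} [Monoid M] {a : M} {s p n : ℕ}
    (hp : a ^ (s + p) = a ^ s) (hn : s ≤ n) : a ^ n = a ^ (s + (n - s) % p) := by
  have periodic : ∀ k r, a ^ (s + p * k + r) = a ^ (s + r) := by
    intro k r
    induction k with
    | zero => simp
    | succ k ih =>
      calc a ^ (s + p * (k + 1) + r) = a ^ (s + p) * a ^ (p * k + r) := by
            rw [← pow_add]; ring_nf
        _ = a ^ (s + p * k + r) := by rw [hp, ← pow_add, add_assoc]
        _ = a ^ (s + r) := ih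
  have := periodic ((n - s) / p) ((n - s) % p)
  rwa [add_assoc s, Nat.div_add_mod, Nat.add_sub_cancel' hn] at this

theorem ZMod.valMinAbs_intCast_of_two_mul_abs_lt {n : ℕ} [NeZero n] {m : ℤ} (h : 2 * |m| < n) :
    (m : ZMod n).valMinAbs = m := by
  rw [ZMod.valMinAbs_spec]
  exact ⟨rfl, by linarith [neg_abs_le m], by linarith [le_abs_self m]⟩

theorem ten_lt_abs_valMinAbs_two_pow_sub_three_pow :
    ∀ r < 216, ∀ t < 16, 10 < |((2 : ZMod 88128) ^ (6 + r) - 3 ^ (4 + t)).valMinAbs| := by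
  decide +kernel

theorem ten_lt_abs_two_pow_sub_three_pow_of_le {x y : ℕ} (hx : 6 ≤ x) (hy : 4 ≤ y) :
    10 < |(2 : ℤ) ^ x - 3 ^ y| := by
  by_contra! hsmall
  have hreduce : (((2 : ℤ) ^ x - 3 ^ y : ℤ) : ZMod 88128) =
      2 ^ (6 + (x - 6) % 216) - 3 ^ (4 + (y - 4) % 16) := by
    push_cast
    rw [pow_eq_pow_add_mod_of_pow_add_eq (p := 216) (by decide +kernel) hx,
      pow_eq_pow_add_mod_of_pow_add_eq (p := 16) (by decide +kernel) hy]
  have hcheck := ten_lt_abs_valMinAbs_two_pow_sub_three_pow ((x - 6) % 216)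
    (Nat.mod_lt _ (by norm_num)) ((y - 4) % 16) (Nat.mod_lt _ (by norm_num))
  rw [← hreduce, ZMod.valMinAbs_intCast_of_two_mul_abs_lt (by push_cast; linarith)] at hcheck
  exact hcheck.not_ge hsmall

theorem herschfeld_consequence_general (x y : ℕ)
    (h : 5 < x ∨ 3 < y) : 10 < |(2 : ℤ)^x - 3^y| := by
  rcases le_or_gt x 5 with hx | hx
  · have h2 : (2 : ℤ) ^ x ≤ 2 ^ 5 := pow_le_pow_right₀ (by norm_num) hx
    have h3 : (3 : ℤ) ^ 4 ≤ 3 ^ y := pow_le_pow_right₀ (by norm_num) (h.resolve_left hx.not_gt)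
    rw [lt_abs]; right; linarith
  rcases le_or_gt y 3 with hy | hy
  · have h2 : (2 : ℤ) ^ 6 ≤ 2 ^ x := pow_le_pow_right₀ (by norm_num) hx
    have h3 : (3 : ℤ) ^ y ≤ 3 ^ 3 := pow_le_pow_right₀ (by norm_num) hy
    rw [lt_abs]; left; linarith
  exact ten_lt_abs_two_pow_sub_three_pow_of_le hx hy

theorem herschfeld_consequence (x y : ℕ) (hx : 0 < x) (hy : 0 < y)
    (h : 5 < x ∨ 3 < y) : 10 < |(2 : ℤ)^x - 3^y| :=
  herschfeld_consequence_general x y h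
end

section
/- Suppose there are constants θ and κ with 1 < θ < (log 3)/(2 log(3/2)) such that every triple of coprime positive integers a + b = c satisfies c < κ·rad(abc)^θ. Set k₀ = ⌊(2θ log 6 + log κ)/(log 3 − 2θ log(3/2))⌋. Then for every integer k ≥ k₀ (in fact k > k₀), writing 3^k = 2^k·q + r with 0 < r < 2^k, one has r ≤ 2^k − q − 3. -/
/-- The radical (squarefree kernel) of a natural number. -/
def rad (n : ℕ) : ℕ := ∏ p ∈ n.primeFactors, p

/-!
If `r ≥ 2^k - q - 2`, then `N = 2^k - r` satisfies `3^k + N = 2^k (q + 1)` with `0 < N ≤ q + 2`.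
Dividing this sum by `g = gcd(3^k, N)` gives a coprime abc triple with radical at most
`6 N (q + 1) / g²`, so the abc inequality yields `3^k < κ (6 (q + 1) (q + 2))^θ ≤ κ (27 (3/2)^(2k))^θ`.
Taking logarithms bounds `k (log 3 - 2θ log (3/2))`, and since `θ ≥ 1` the bound gives `k + 1 ≤ k₀`.
-/
open Real UniqueFactorizationMonoid

lemma rad_eq_radical (n : ℕ) : rad n = radical n :=
  Nat.radical_eq_prod_primeFactors.symm

lemma rad_pow_le_self {n : ℕ} (hn : n ≠ 0) (k : ℕ) : rad (n ^ k) ≤ n := by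
  rw [rad_eq_radical]
  exact (Nat.le_of_dvd (Nat.radical_pos n) radical_pow_dvd).trans (Nat.radical_le_self_iff.mpr hn)

lemma rad_mul_mul_mul_le {A B a b m : ℕ} (haA : a ∣ A) (hA : A ≠ 0) (hb : b ≠ 0) (hm : m ≠ 0) :
    rad (a * b * (B * m)) ≤ rad A * rad B * b * m := by
  simp only [rad_eq_radical]
  have hdvd : radical (a * b * (B * m)) ∣ radical a * radical b * (radical B * radical m) :=
    radical_mul_dvd.trans <| mul_dvd_mul radical_mul_dvd radical_mul_dvd
  have ha : radical a ≤ radical A := Nat.le_of_dvd (Nat.radical_pos A) (radical_dvd_radical haA hA)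
  have hb : radical b ≤ b := Nat.radical_le_self_iff.mpr hb
  have hm : radical m ≤ m := Nat.radical_le_self_iff.mpr hm
  calc radical (a * b * (B * m)) ≤ radical a * radical b * (radical B * radical m) :=
        Nat.le_of_dvd (Nat.pos_of_ne_zero (by simp)) hdvd
    _ ≤ radical A * b * (radical B * m) := by gcongr
    _ = radical A * radical B * b * m := by ring

lemma exists_coprime_add_eq_mul {A B N M : ℕ} (hAB : A.Coprime B) (hN : 0 < N)
    (h : A + N = B * M) :
    ∃ g a b m, 0 < g ∧ A = a * g ∧ N = b * g ∧ M = m * g ∧ a.Coprime b ∧ a + b = B * m := by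
  obtain ⟨g, a, b, hg, hab, rfl, rfl⟩ := Nat.exists_coprime' (Nat.gcd_pos_of_pos_right A hN)
  have hgB : g.Coprime B := hAB.coprime_dvd_left (dvd_mul_left g a)
  obtain ⟨m, rfl⟩ : g ∣ M := hgB.dvd_of_dvd_mul_left ⟨a + b, by rw [← h]; ring⟩
  refine ⟨g, a, b, m, hg, rfl, rfl, by ring, hab, ?_⟩
  apply Nat.eq_of_mul_eq_mul_right hg
  rw [add_mul, h]; ring

def ABCInequality (θ κ : ℝ) : Prop :=
  ∀ a b c : ℕ, 0 < a → 0 < b → 0 < c → Nat.Coprime a b → a + b = c →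
    (c : ℝ) < κ * (rad (a * b * c) : ℝ) ^ θ

namespace ABCInequality

variable {θ κ : ℝ}

lemma one_sub_mul_log_two_lt_log (h : ABCInequality θ κ) (hκ : 0 < κ) :
    (1 - θ) * log 2 < log κ := by
  have h2 := h 1 1 2 one_pos one_pos two_pos (Nat.coprime_one_left 1) rfl
  have hrad : rad (1 * 1 * 2) = 2 := by norm_num [rad, Nat.prime_two.primeFactors]
  rw [hrad, Nat.cast_ofNat, ← div_lt_iff₀' hκ] at h2
  have := log_lt_log (by positivity) h2
  rw [log_div two_ne_zero hκ.ne', log_rpow two_pos] at this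
  linarith

/-- The common factor `g = gcd(A, N)` costs `g` on the left but saves `g ^ (2θ) ≥ g` in the
radical. -/
lemma lt_of_add_eq_mul (h : ABCInequality θ κ) (hκ : 0 < κ) (hθ : 1 / 2 ≤ θ) {A B N M : ℕ}
    (hAB : A.Coprime B) (hA : 0 < A) (hN : 0 < N) (hsum : A + N = B * M) :
    (A : ℝ) < κ * ((rad A * rad B * N * M : ℕ) : ℝ) ^ θ := by
  obtain ⟨g, a, b, m, hg, rfl, rfl, rfl, hab, habm⟩ := exists_coprime_add_eq_mul hAB hN hsum
  have ha : 0 < a := Nat.pos_of_mul_pos_right hA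
  have hb : 0 < b := Nat.pos_of_mul_pos_right hN
  have hBm : 0 < B * m := habm ▸ Nat.add_pos_left ha b
  have hm : 0 < m := Nat.pos_of_mul_pos_left hBm
  have hrad := rad_mul_mul_mul_le (dvd_mul_right a g) hA.ne' hb.ne' hm.ne' (B := B)
  set X : ℕ := rad (a * g) * rad B * b * m
  have hg1 : (1 : ℝ) ≤ g := by exact_mod_cast hg
  have hg_le : (g : ℝ) ≤ ((g : ℝ) ^ 2) ^ θ := by
    rw [← rpow_natCast, ← rpow_mul (by positivity)]
    conv_lhs => rw [← rpow_one (g : ℝ)]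
    exact rpow_le_rpow_of_exponent_le hg1 (by push_cast; linarith)
  have habc : (a : ℝ) < κ * (X : ℝ) ^ θ := calc
    (a : ℝ) < (B * m : ℕ) := by exact_mod_cast habm ▸ Nat.lt_add_of_pos_right hb
    _ < κ * (rad (a * b * (B * m)) : ℝ) ^ θ := h a b (B * m) ha hb hBm hab habm
    _ ≤ κ * (X : ℝ) ^ θ := by gcongr
  calc ((a * g : ℕ) : ℝ) = a * g := by push_cast; rfl
    _ < κ * (X : ℝ) ^ θ * g := mul_lt_mul_of_pos_right habc (by positivity)
    _ ≤ κ * (X : ℝ) ^ θ * ((g : ℝ) ^ 2) ^ θ := by gcongr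
    _ = κ * ((rad (a * g) * rad B * (b * g) * (m * g) : ℕ) : ℝ) ^ θ := by
      rw [mul_assoc, ← mul_rpow (by positivity) (by positivity)]
      push_cast [X]
      ring_nf

end ABCInequality

lemma add_sub_mod_eq_mul_div_add_one (n : ℕ) {d : ℕ} (hd : 0 < d) :
    n + (d - n % d) = d * (n / d + 1) := by
  have hdiv := Nat.div_add_mod n d
  have hmod := Nat.mod_lt n hd
  rw [mul_add, mul_one]
  omega

/-- Here `q = ⌊(3/2)^k⌋` and `r = 3^k - 2^k q`, and the hypothesis says `r ≥ 2^k - q - 2`. -/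
lemma ABCInequality.three_pow_lt {θ κ : ℝ} (h : ABCInequality θ κ) (hκ : 0 < κ) (hθ : 1 / 2 ≤ θ)
    {k : ℕ} (hmiss : 2 ^ k ≤ 3 ^ k % 2 ^ k + 3 ^ k / 2 ^ k + 2) :
    (3 : ℝ) ^ k < κ * (6 * ((3 ^ k / 2 ^ k : ℕ) + 1) * ((3 ^ k / 2 ^ k : ℕ) + 2) : ℝ) ^ θ := by
  set q := 3 ^ k / 2 ^ k
  have h2k : 0 < 2 ^ k := by positivity
  have hsum := add_sub_mod_eq_mul_div_add_one (3 ^ k) h2k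
  have hN : 0 < 2 ^ k - 3 ^ k % 2 ^ k := Nat.sub_pos_of_lt (Nat.mod_lt _ h2k)
  have hlt := h.lt_of_add_eq_mul hκ hθ (Nat.Coprime.pow k k (by norm_num)) (by positivity) hN hsum
  have hrad3 := rad_pow_le_self three_ne_zero k
  have hrad2 := rad_pow_le_self two_ne_zero k
  have hNq : 2 ^ k - 3 ^ k % 2 ^ k ≤ q + 2 := by omega
  calc (3 : ℝ) ^ k = ((3 ^ k : ℕ) : ℝ) := by push_cast; rfl
    _ < _ := hlt
    _ ≤ κ * ((3 * 2 * (q + 2) * (q + 1) : ℕ) : ℝ) ^ θ := by gcongr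
    _ = _ := by push_cast; ring_nf

lemma six_mul_div_add_one_mul_le {k : ℕ} (hk : 1 ≤ k) :
    (6 * ((3 ^ k / 2 ^ k : ℕ) + 1) * ((3 ^ k / 2 ^ k : ℕ) + 2) : ℝ) ≤ 27 * (((3 : ℝ) / 2) ^ k) ^ 2 := by
  have hq : ((3 ^ k / 2 ^ k : ℕ) : ℝ) ≤ ((3 : ℝ) / 2) ^ k := by
    rw [div_pow]; exact_mod_cast Nat.cast_div_le
  have ht : (3 : ℝ) / 2 ≤ ((3 : ℝ) / 2) ^ k := le_self_pow₀ (by norm_num) (by omega)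
  have hq0 : (0 : ℝ) ≤ (3 ^ k / 2 ^ k : ℕ) := Nat.cast_nonneg _
  nlinarith

/-- The `k₀` of the statement is `⌊davidThreshold θ κ⌋`. -/
noncomputable def davidThreshold (θ κ : ℝ) : ℝ :=
  (2 * θ * log 6 + log κ) / (log 3 - 2 * θ * log (3 / 2))

lemma log_six_eq : log 6 = log 2 + log 3 := by
  rw [← log_mul two_ne_zero three_ne_zero]; norm_num

lemma log_three_div_two_eq : log (3 / 2) = log 3 - log 2 :=
  log_div three_ne_zero two_ne_zero

lemma ABCInequality.one_le_davidThreshold {θ κ : ℝ} (h : ABCInequality θ κ) (hκ : 0 < κ)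
    (hθ : 1 ≤ θ) (hα : 0 < log 3 - 2 * θ * log (3 / 2)) : 1 ≤ davidThreshold θ κ := by
  have hκ2 := h.one_sub_mul_log_two_lt_log hκ
  have h23 : log 2 < log 3 := log_lt_log two_pos (by norm_num)
  have h2 : 0 < log 2 := log_pos one_lt_two
  rw [davidThreshold, le_div_iff₀ hα, log_six_eq, log_three_div_two_eq]
  nlinarith [mul_nonneg (sub_nonneg.mpr hθ) (sub_nonneg.mpr h23.le)]

lemma succ_lt_davidThreshold {θ κ : ℝ} (hκ : 0 < κ) (hθ : 1 ≤ θ)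
    (hα : 0 < log 3 - 2 * θ * log (3 / 2)) {k : ℕ}
    (h : (3 : ℝ) ^ k < κ * (27 * (((3 : ℝ) / 2) ^ k) ^ 2) ^ θ) :
    (k : ℝ) + 1 < davidThreshold θ κ := by
  have hlog := log_lt_log (by positivity) h
  rw [log_mul hκ.ne' (by positivity), log_rpow (by positivity), log_mul (by norm_num) (by positivity),
    log_pow, log_pow, log_pow, show (27 : ℝ) = 3 ^ 3 by norm_num, log_pow] at hlog
  have h3 : 0 < log 3 := log_pos (by norm_num)
  rw [davidThreshold, lt_div_iff₀ hα, log_six_eq, log_three_div_two_eq]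
  rw [log_three_div_two_eq] at hlog
  push_cast at hlog
  nlinarith [mul_nonneg (sub_nonneg.mpr hθ) h3.le]

theorem sinnou_david (θ κ : ℝ) (hκ : 0 < κ) (hθ1 : 1 < θ)
    (hθ2 : θ < Real.log 3 / (2 * Real.log (3 / 2)))
    (habc : ∀ a b c : ℕ, 0 < a → 0 < b → 0 < c → Nat.Coprime a b → a + b = c →
      (c : ℝ) < κ * (rad (a * b * c) : ℝ) ^ θ) :
    ∀ k : ℕ,
      (⌊(2 * θ * Real.log 6 + Real.log κ) / (Real.log 3 - 2 * θ * Real.log (3 / 2))⌋ : ℝ)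
        ≤ (k : ℝ) →
      ((3 ^ k % 2 ^ k : ℕ) : ℤ) ≤ (2 : ℤ) ^ k - (3 ^ k / 2 ^ k : ℕ) - 3 := by
  intro k hk
  change (⌊davidThreshold θ κ⌋ : ℝ) ≤ k at hk
  have hABC : ABCInequality θ κ := habc
  have hα : 0 < log 3 - 2 * θ * log (3 / 2) := by
    have : 0 < log (3 / 2) := log_pos (by norm_num)
    rw [lt_div_iff₀ (by positivity)] at hθ2
    linarith
  have hk1 : 1 ≤ k := by
    have h1 : (1 : ℤ) ≤ ⌊davidThreshold θ κ⌋ :=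
      Int.le_floor.mpr (by exact_mod_cast hABC.one_le_davidThreshold hκ hθ1.le hα)
    have : (1 : ℝ) ≤ k := le_trans (by exact_mod_cast h1) hk
    exact_mod_cast this
  set q := 3 ^ k / 2 ^ k
  set r := 3 ^ k % 2 ^ k
  by_contra hcon
  have hmiss : 2 ^ k ≤ r + q + 2 := by
    have : ((2 ^ k : ℕ) : ℤ) ≤ ((r + q + 2 : ℕ) : ℤ) := by push_cast; linarith
    exact_mod_cast this
  have h3 := hABC.three_pow_lt hκ (by linarith) hmiss
  have hlt := succ_lt_davidThreshold hκ hθ1.le hα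
    (h3.trans_le (mul_le_mul_of_nonneg_left
      (rpow_le_rpow (by positivity) (six_mul_div_add_one_mul_le hk1) (by linarith)) hκ.le))
  have : (k : ℤ) + 1 ≤ ⌊davidThreshold θ κ⌋ := Int.le_floor.mpr (by push_cast; exact hlt.le)
  have : (k : ℝ) + 1 ≤ ⌊davidThreshold θ κ⌋ := by exact_mod_cast this
  linarith
end
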